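/- Let θ ∈ (0,1) and λ ∈ (0,1). The map Ψ is twice differentiable with Ψ''(g) = −λ(1−λ)·[ θ²·e^{θg}/(1 − λ + λ·e^{θg})² − (1−θ)²·e^{−(1−θ)g}/(1 − λ + λ·e^{−(1−θ)g})² ], and for every g ∈ ℝ one has |Ψ''(g)| ≤ (θ² + (1−θ)²)/4 ≤ 1/4. -/

import Mathlib

open Real

/-- One-block pre-arbitrage gap update map of the partially active AMM built on
a G3M with weights `(θ, 1-θ)`. -/
noncomputable def Psi (θ lam g : ℝ) : ℝ :=
  g - Real.log (1 - lam + lam * Real.exp (θ * g))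
    + Real.log (1 - lam + lam * Real.exp (-(1 - θ) * g))

/-- The first derivative of `Psi`. -/
noncomputable def PsiDeriv (θ lam g : ℝ) : ℝ :=
  1 - lam * θ * Real.exp (θ * g) / (1 - lam + lam * Real.exp (θ * g))
    - lam * (1 - θ) * Real.exp (-(1 - θ) * g) / (1 - lam + lam * Real.exp (-(1 - θ) * g))

/-- The claimed second derivative of `Psi`. -/
noncomputable def PsiDeriv2 (θ lam g : ℝ) : ℝ :=
  -(lam * (1 - lam)) *
    (θ ^ 2 * Real.exp (θ * g) / (1 - lam + lam * Real.exp (θ * g)) ^ 2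
      - (1 - θ) ^ 2 * Real.exp (-(1 - θ) * g) / (1 - lam + lam * Real.exp (-(1 - θ) * g)) ^ 2)

/-!
Each logarithmic term of `Psi` is `log (1 - λ + λ e^{c g})`, whose second derivative is
`c² · a b / (a + b)²` with `a = 1 - λ`, `b = λ e^{c g}`. By AM-GM this factor lies in `[0, 1/4]`,
so the difference of the two terms (with `c = θ` and `c = -(1 - θ)`) is at most
`(θ² + (1 - θ)²) / 4` in absolute value.
-/

lemma mul_div_add_sq_le_quarter (a b : ℝ) : a * b / (a + b) ^ 2 ≤ 1 / 4 :=
  div_le_of_le_mul₀ (sq_nonneg _) (by norm_num) (by nlinarith [sq_nonneg (a - b)])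

lemma abs_mul_sub_mul_le {p q u v M : ℝ} (hp : 0 ≤ p) (hq : 0 ≤ q)
    (hu : u ∈ Set.Icc 0 M) (hv : v ∈ Set.Icc 0 M) : |p * u - q * v| ≤ (p + q) * M := by
  have hpu := mul_le_mul_of_nonneg_left hu.2 hp
  have hqv := mul_le_mul_of_nonneg_left hv.2 hq
  rw [abs_le]
  constructor <;> nlinarith [mul_nonneg hp hu.1, mul_nonneg hq hv.1]

section Mixture

variable {lam : ℝ} (h0 : 0 ≤ lam) (h1 : lam ≤ 1)
include h0 h1

lemma one_sub_add_mul_exp_pos (y : ℝ) : 0 < 1 - lam + lam * exp y := by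
  rcases h0.lt_or_eq with h0 | rfl
  · nlinarith [exp_pos y]
  · norm_num

lemma hasDerivAt_log_one_sub_add_mul_exp (c x : ℝ) :
    HasDerivAt (fun x => log (1 - lam + lam * exp (c * x)))
      (lam * c * exp (c * x) / (1 - lam + lam * exp (c * x))) x := by
  have h := ((((hasDerivAt_id' x).const_mul c).exp.const_mul lam).const_add (1 - lam)).log
    (one_sub_add_mul_exp_pos h0 h1 (c * x)).ne'
  refine h.congr_deriv ?_
  ring

lemma hasDerivAt_mul_exp_div_one_sub_add_mul_exp (k c x : ℝ) :
    HasDerivAt (fun x => lam * k * exp (c * x) / (1 - lam + lam * exp (c * x)))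
      (lam * (1 - lam) * k * c * exp (c * x) / (1 - lam + lam * exp (c * x)) ^ 2) x := by
  have hexp := ((hasDerivAt_id' x).const_mul c).exp
  have hD := one_sub_add_mul_exp_pos h0 h1 (c * x)
  have h := (hexp.const_mul (lam * k)).div ((hexp.const_mul lam).const_add (1 - lam)) hD.ne'
  refine h.congr_deriv ?_
  field_simp
  ring

lemma mul_exp_div_one_sub_add_mul_exp_sq_mem_Icc (y : ℝ) :
    (1 - lam) * (lam * exp y) / (1 - lam + lam * exp y) ^ 2 ∈ Set.Icc 0 (1 / 4) :=
  ⟨div_nonneg (mul_nonneg (by linarith) (mul_nonneg h0 (exp_pos y).le)) (sq_nonneg _),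
    mul_div_add_sq_le_quarter _ _⟩

end Mixture

theorem stmt3 (θ lam : ℝ) (hθ : θ ∈ Set.Ioo (0:ℝ) 1) (hlam : lam ∈ Set.Ioo (0:ℝ) 1) :
    (∀ g : ℝ, HasDerivAt (Psi θ lam) (PsiDeriv θ lam g) g) ∧
    (∀ g : ℝ, HasDerivAt (PsiDeriv θ lam) (PsiDeriv2 θ lam g) g) ∧
    (∀ g : ℝ, |PsiDeriv2 θ lam g| ≤ (θ ^ 2 + (1 - θ) ^ 2) / 4) ∧
    (θ ^ 2 + (1 - θ) ^ 2) / 4 ≤ 1 / 4 := by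
  have h0 := hlam.1.le
  have h1 := hlam.2.le
  refine ⟨fun g => ?_, fun g => ?_, fun g => ?_, by nlinarith [hθ.1, hθ.2]⟩
  · refine (((hasDerivAt_id' g).sub (hasDerivAt_log_one_sub_add_mul_exp h0 h1 θ g)).add
      (hasDerivAt_log_one_sub_add_mul_exp h0 h1 (-(1 - θ)) g)).congr_deriv ?_
    simp only [PsiDeriv]
    ring
  · refine (((hasDerivAt_const g 1).sub
      (hasDerivAt_mul_exp_div_one_sub_add_mul_exp h0 h1 θ θ g)).sub
      (hasDerivAt_mul_exp_div_one_sub_add_mul_exp h0 h1 (1 - θ) (-(1 - θ)) g)).congr_deriv ?_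
    simp only [PsiDeriv2]
    ring
  · set r := fun y => (1 - lam) * (lam * exp y) / (1 - lam + lam * exp y) ^ 2
    have hΨ'' : PsiDeriv2 θ lam g = -(θ ^ 2 * r (θ * g) - (1 - θ) ^ 2 * r (-(1 - θ) * g)) := by
      simp only [PsiDeriv2, r]
      ring
    rw [hΨ'', abs_neg, ← mul_one_div _ 4]
    exact abs_mul_sub_mul_le (sq_nonneg _) (sq_nonneg _)
      (mul_exp_div_one_sub_add_mul_exp_sq_mem_Icc h0 h1 _)
      (mul_exp_div_one_sub_add_mul_exp_sq_mem_Icc h0 h1 _)
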